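/- The game i-MARK({1,3},{2,3}) has no convergence: for every k ≥ 1 there exists a guess seed σ for starting position n = 12k whose guess sequence satisfies 𝒢_σ(m) ≠ 𝒢(m) for infinitely many m ≥ n. Consequently, for every k ≥ 1 and every c ≥ 3, convergence does not occur in c steps at starting position 12k; that is, there exist guess seeds σ, σ' for 12k and a position m with 12k+c ≤ m < 12k+c+3 such that 𝒢_σ(m) ≠ 𝒢_{σ'}(m). -/

import Mathlib

/-- The minimum excludant of a set of naturals. -/
noncomputable def mex (T : Set ℕ) : ℕ := sInf {k : ℕ | k ∉ T}

/-- The set of followers of position `n` in the game i-MARK(S,D):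
`n - s` for `s ∈ S` with `0 < s ≤ n`, and `n / d` for `d ∈ D` with `2 ≤ d`, `0 < n`, `d ∣ n`. -/
def followers (S D : Finset ℕ) (n : ℕ) : Finset ℕ :=
  ((S.filter fun s => 0 < s ∧ s ≤ n).image fun s => n - s) ∪
  ((D.filter fun d => 2 ≤ d ∧ 0 < n ∧ d ∣ n).image fun d => n / d)

theorem followers_lt {S D : Finset ℕ} {n m : ℕ} (h : m ∈ followers S D n) : m < n := by
  simp only [followers, Finset.mem_union, Finset.mem_image, Finset.mem_filter] at h
  rcases h with ⟨s, ⟨-, hs, hsn⟩, rfl⟩ | ⟨d, ⟨-, hd, hn, -⟩, rfl⟩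
  · omega
  · exact Nat.div_lt_self hn (by omega)

/-- The Sprague–Grundy function of i-MARK(S,D). -/
noncomputable def grundy (S D : Finset ℕ) : ℕ → ℕ
  | n => mex ↑((followers S D n).attach.image fun m => grundy S D m.1)
decreasing_by exact followers_lt m.2

/-- The number of followers of position `n` in i-MARK(S,D) (for positive `S` and `D` with
elements `≥ 2`): `φ(0) = 0` and `φ(n) = #{s ∈ S : s ≤ n} + #{d ∈ D : d ∣ n}` for `n > 0`. -/
def numFollowers (S D : Finset ℕ) (n : ℕ) : ℕ :=
  if n = 0 then 0 else (S.filter fun s => s ≤ n).card + (D.filter fun d => d ∣ n).card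

/-- `σ : ℕ → ℕ` is a guess seed for starting position `n` in i-MARK(S,D) if
`σ i ≤ φ(i)` for all `n ≤ i < n + max S` (values of `σ` outside this window are irrelevant). -/
def IsGuessSeed (S D : Finset ℕ) (n : ℕ) (σ : ℕ → ℕ) : Prop :=
  ∀ i, n ≤ i → i < n + S.sup id → σ i ≤ numFollowers S D i

/-- The guess sequence generated by seed `σ` from starting position `n`: it equals `σ` on
`[n, n + max S)`, and from `n + max S` on it is computed by the mex rule, using guessed values
for subtraction followers and true Grundy values for division followers. -/
noncomputable def guessSeq (S D : Finset ℕ) (n : ℕ) (σ : ℕ → ℕ) : ℕ → ℕ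
  | m =>
    if m < n + S.sup id then σ m
    else
      mex ((↑((S.filter fun t => 0 < t ∧ t ≤ m).attach.image
              fun t => guessSeq S D n σ (m - t.1)) : Set ℕ) ∪
        {g | ∃ d ∈ D, 2 ≤ d ∧ 0 < m ∧ d ∣ m ∧ g = grundy S D (m / d)})
decreasing_by
  have ht := t.2
  simp only [Finset.mem_filter] at ht
  omega

/-- Convergence occurs in `c` steps at starting position `n`: any two guess sequences from `n`
agree on all positions `m` with `n + c ≤ m < n + c + max S`. -/
def ConvergesIn (S D : Finset ℕ) (n c : ℕ) : Prop :=
  ∀ σ σ' : ℕ → ℕ, IsGuessSeed S D n σ → IsGuessSeed S D n σ' →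
    ∀ m, n + c ≤ m → m < n + c + S.sup id → guessSeq S D n σ m = guessSeq S D n σ' m

/-!
For `m ≥ 4` the Grundy value `𝒢 m` of i-MARK({1,3},{2,3}) is nonzero when `m` is even, and zero
when `m ≥ 7` is odd and prime to `3`. Both follow by joint induction: an even `m` reaches a zero
by subtracting `1` or `3` (or, for `m = 4, 6`, by division down to `𝒢 2 = 0`), while the
followers of such an odd `m` are all even.

Starting at `n ≡ 0 (mod 4)` with a seed `(0, 1, *)` produces a shifted pattern instead: the
guesses vanish at multiples of `4` and are nonzero at odd positions. The division followers of a
multiple of `4` are even, so their true values are nonzero and cannot break this pattern. Hence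
guess and truth disagree at every multiple of `4` and every odd position prime to `3`, and any
three consecutive positions contain such a position. Seeding with the true values reproduces `𝒢`.
-/

open Finset

lemma mex_eq_zero_iff {T : Set ℕ} (hT : T.Finite) : mex T = 0 ↔ 0 ∉ T := by
  refine ⟨fun h h0 => ?_, fun h => Nat.eq_zero_of_le_zero (Nat.sInf_le h)⟩
  have hmem := Nat.sInf_mem hT.infinite_compl.nonempty
  exact (show sInf {k | k ∉ T} = 0 from h) ▸ hmem <| h0

lemma mex_le_card (T : Finset ℕ) : mex ↑T ≤ #T := by
  obtain ⟨k, hk, hkT⟩ : ∃ k ∈ range (#T + 1), k ∉ T :=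
    exists_mem_notMem_of_card_lt_card (by simp)
  exact (Nat.sInf_le (by simpa using hkT)).trans (Nat.lt_succ_iff.mp (mem_range.mp hk))

section General

variable {S D : Finset ℕ}

lemma mem_followers {n m : ℕ} :
    m ∈ followers S D n ↔ (∃ s ∈ S, 0 < s ∧ s ≤ n ∧ m = n - s) ∨
      ∃ d ∈ D, 2 ≤ d ∧ 0 < n ∧ d ∣ n ∧ m = n / d := by
  simp only [followers, mem_union, mem_image, mem_filter, and_assoc, eq_comm (a := m)]

lemma grundy_eq_mex (n : ℕ) :
    grundy S D n = mex ↑((followers S D n).image (grundy S D)) := by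
  rw [grundy]
  congr 2
  ext
  simp

lemma grundy_eq_zero_iff (n : ℕ) :
    grundy S D n = 0 ↔ ∀ m ∈ followers S D n, grundy S D m ≠ 0 := by
  rw [grundy_eq_mex, mex_eq_zero_iff (finite_toSet _)]
  simp

lemma grundy_le_numFollowers (n : ℕ) : grundy S D n ≤ numFollowers S D n := by
  have hcard : #(followers S D n) ≤ numFollowers S D n := by
    rw [numFollowers]
    split_ifs with hn
    · subst hn
      simp [eq_empty_of_forall_notMem fun m hm => Nat.not_lt_zero m (followers_lt hm)]
    · refine (card_union_le _ _).trans (add_le_add ?_ ?_) <;>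
        refine card_image_le.trans (card_le_card fun x hx => ?_) <;>
        simp only [mem_filter] at hx ⊢ <;> tauto
  calc grundy S D n ≤ #((followers S D n).image (grundy S D)) :=
        grundy_eq_mex n ▸ mex_le_card _
    _ ≤ numFollowers S D n := card_image_le.trans hcard

lemma isGuessSeed_grundy (n : ℕ) : IsGuessSeed S D n (grundy S D) :=
  fun i _ _ => grundy_le_numFollowers i

lemma guessSeq_of_lt {n m : ℕ} (σ : ℕ → ℕ) (h : m < n + S.sup id) :
    guessSeq S D n σ m = σ m := by
  rw [guessSeq, if_pos h]

lemma guessSeq_of_le {n m : ℕ} (σ : ℕ → ℕ) (h : n + S.sup id ≤ m) :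
    guessSeq S D n σ m =
      mex (↑((S.filter fun t => 0 < t ∧ t ≤ m).image fun t => guessSeq S D n σ (m - t)) ∪
        {g | ∃ d ∈ D, 2 ≤ d ∧ 0 < m ∧ d ∣ m ∧ g = grundy S D (m / d)}) := by
  rw [guessSeq, if_neg (not_lt.mpr h)]
  congr 3
  ext
  simp

lemma guessSeq_eq_zero_iff {n m : ℕ} (σ : ℕ → ℕ) (h : n + S.sup id ≤ m) :
    guessSeq S D n σ m = 0 ↔
      (∀ t ∈ S, 0 < t → t ≤ m → guessSeq S D n σ (m - t) ≠ 0) ∧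
        ∀ d ∈ D, 2 ≤ d → 0 < m → d ∣ m → grundy S D (m / d) ≠ 0 := by
  have hfin : {g | ∃ d ∈ D, 2 ≤ d ∧ 0 < m ∧ d ∣ m ∧ g = grundy S D (m / d)}.Finite :=
    (D.image fun d => grundy S D (m / d)).finite_toSet.subset
      (by rintro _ ⟨d, hd, -, -, -, rfl⟩; exact mem_image_of_mem _ hd)
  rw [guessSeq_of_le σ h, mex_eq_zero_iff ((finite_toSet _).union hfin)]
  simp [eq_comm]

lemma guessSeq_eq_grundy {n : ℕ} {σ : ℕ → ℕ}
    (hσ : ∀ i, n ≤ i → i < n + S.sup id → σ i = grundy S D i) :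
    ∀ m, n ≤ m → guessSeq S D n σ m = grundy S D m := by
  intro m
  induction m using Nat.strong_induction_on with
  | _ m ih =>
  intro hm
  rcases lt_or_ge m (n + S.sup id) with hlt | hle
  · rw [guessSeq_of_lt σ hlt, hσ m hm hlt]
  have hsub : ∀ t ∈ S, 0 < t → t ≤ m → guessSeq S D n σ (m - t) = grundy S D (m - t) :=
    fun t ht ht0 htm => ih _ (by omega) (by have := le_sup (f := id) ht; simp at this; omega)
  rw [guessSeq_of_le σ hle, grundy_eq_mex]
  congr 1
  ext g
  simp only [Set.mem_union, coe_image, Set.mem_image, mem_coe, mem_filter, mem_followers,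
    Set.mem_ofPred_eq]
  constructor
  · rintro (⟨t, ⟨ht, ht0, htm⟩, rfl⟩ | ⟨d, hd, hd2, hm0, hdm, rfl⟩)
    · exact ⟨m - t, Or.inl ⟨t, ht, ht0, htm, rfl⟩, (hsub t ht ht0 htm).symm⟩
    · exact ⟨m / d, Or.inr ⟨d, hd, hd2, hm0, hdm, rfl⟩, rfl⟩
  · rintro ⟨_, ⟨t, ht, ht0, htm, rfl⟩ | ⟨d, hd, hd2, hm0, hdm, rfl⟩, rfl⟩
    · exact Or.inl ⟨t, ⟨ht, ht0, htm⟩, hsub t ht ht0 htm⟩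
    · exact Or.inr ⟨d, hd, hd2, hm0, hdm, rfl⟩

end General

section IMark1323

local notation "𝒢" => grundy {1, 3} {2, 3}

lemma grundy_imark_13_23_eq_zero_iff (n : ℕ) :
    𝒢 n = 0 ↔ (1 ≤ n → 𝒢 (n - 1) ≠ 0) ∧ (3 ≤ n → 𝒢 (n - 3) ≠ 0) ∧
      (0 < n → 2 ∣ n → 𝒢 (n / 2) ≠ 0) ∧ (0 < n → 3 ∣ n → 𝒢 (n / 3) ≠ 0) := by
  rw [grundy_eq_zero_iff]
  simp [mem_followers, or_imp, forall_and]
  aesop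

lemma grundy_imark_13_23_two : 𝒢 2 = 0 := by
  have h0 : 𝒢 0 = 0 := (grundy_imark_13_23_eq_zero_iff 0).2 (by omega)
  have h1 : 𝒢 1 ≠ 0 := fun h => ((grundy_imark_13_23_eq_zero_iff 1).1 h).1 le_rfl h0
  exact (grundy_imark_13_23_eq_zero_iff 2).2 ⟨fun _ => h1, by omega, fun _ _ => h1, by omega⟩

lemma grundy_imark_13_23_odd_eq_zero_even_ne_zero (n : ℕ) :
    (n % 2 = 1 → ¬ 3 ∣ n → 7 ≤ n → 𝒢 n = 0) ∧ (n % 2 = 0 → 4 ≤ n → 𝒢 n ≠ 0) := by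
  induction n using Nat.strong_induction_on with
  | _ n ih =>
  refine ⟨fun hodd h3 h7 => ?_, fun heven h4 => ?_⟩
  · rw [grundy_imark_13_23_eq_zero_iff]
    refine ⟨fun _ => (ih (n - 1) (by omega)).2 (by omega) (by omega),
      fun _ => (ih (n - 3) (by omega)).2 (by omega) (by omega), by omega, by omega⟩
  · rw [Ne, grundy_imark_13_23_eq_zero_iff]
    rintro ⟨h1, h3, h2d, h3d⟩
    by_cases hsmall : n = 4 ∨ n = 6
    · rcases hsmall with rfl | rfl
      · exact h2d (by omega) (by omega) grundy_imark_13_23_two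
      · exact h3d (by omega) (by omega) grundy_imark_13_23_two
    by_cases hn3 : n % 3 = 1
    · exact h3 (by omega) ((ih (n - 3) (by omega)).1 (by omega) (by omega) (by omega))
    · exact h1 (by omega) ((ih (n - 1) (by omega)).1 (by omega) (by omega) (by omega))

lemma guessSeq_imark_13_23_eq_zero_iff {n m : ℕ} (σ : ℕ → ℕ) (h : n + 3 ≤ m) :
    guessSeq {1, 3} {2, 3} n σ m = 0 ↔
      guessSeq {1, 3} {2, 3} n σ (m - 1) ≠ 0 ∧ guessSeq {1, 3} {2, 3} n σ (m - 3) ≠ 0 ∧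
        (2 ∣ m → 𝒢 (m / 2) ≠ 0) ∧ (3 ∣ m → 𝒢 (m / 3) ≠ 0) := by
  rw [guessSeq_eq_zero_iff σ h]
  simp [and_assoc, show 0 < m by omega, show 1 ≤ m by omega, show 3 ≤ m by omega]

lemma guessSeq_imark_13_23_four_dvd_eq_zero_odd_ne_zero {n : ℕ} {σ : ℕ → ℕ} (hn : 4 ∣ n)
    (hn4 : 4 ≤ n) (h0 : σ n = 0) (h1 : σ (n + 1) ≠ 0) (m : ℕ) (hm : n ≤ m) :
    (4 ∣ m → guessSeq {1, 3} {2, 3} n σ m = 0) ∧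
      (m % 2 = 1 → guessSeq {1, 3} {2, 3} n σ m ≠ 0) := by
  induction m using Nat.strong_induction_on with
  | _ m ih =>
  rcases lt_or_ge m (n + 3) with hlt | hle
  · rw [guessSeq_of_lt σ hlt]
    exact ⟨fun _ => (show m = n by omega) ▸ h0, fun _ => (show m = n + 1 by omega) ▸ h1⟩
  refine ⟨fun h4 => ?_, fun hodd => ?_⟩
  · rw [guessSeq_imark_13_23_eq_zero_iff σ hle]
    exact ⟨(ih (m - 1) (by omega) (by omega)).2 (by omega),
      (ih (m - 3) (by omega) (by omega)).2 (by omega),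
      fun _ => (grundy_imark_13_23_odd_eq_zero_even_ne_zero (m / 2)).2 (by omega) (by omega),
      fun _ => (grundy_imark_13_23_odd_eq_zero_even_ne_zero (m / 3)).2 (by omega) (by omega)⟩
  · rw [Ne, guessSeq_imark_13_23_eq_zero_iff σ hle]
    rintro ⟨h1, h3, -, -⟩
    by_cases hm1 : 4 ∣ m - 1
    · exact h1 ((ih (m - 1) (by omega) (by omega)).1 hm1)
    · exact h3 ((ih (m - 3) (by omega) (by omega)).1 (by omega))

lemma guessSeq_imark_13_23_ne_grundy {n : ℕ} {σ : ℕ → ℕ} (hn : 4 ∣ n) (hn4 : 4 ≤ n)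
    (h0 : σ n = 0) (h1 : σ (n + 1) ≠ 0) {m : ℕ} (hm : n ≤ m) (hm7 : 7 ≤ m)
    (hpos : 4 ∣ m ∨ m % 2 = 1 ∧ ¬ 3 ∣ m) :
    guessSeq {1, 3} {2, 3} n σ m ≠ 𝒢 m := by
  have hguess := guessSeq_imark_13_23_four_dvd_eq_zero_odd_ne_zero hn hn4 h0 h1 m hm
  rcases hpos with h4 | ⟨hodd, h3⟩
  · rw [hguess.1 h4]
    exact ((grundy_imark_13_23_odd_eq_zero_even_ne_zero m).2 (by omega) (by omega)).symm
  · rw [(grundy_imark_13_23_odd_eq_zero_even_ne_zero m).1 hodd h3 hm7]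
    exact hguess.2 hodd

lemma isGuessSeed_imark_13_23_single (n : ℕ) :
    IsGuessSeed {1, 3} {2, 3} n (Pi.single (n + 1) 1) := by
  intro i _ _
  rcases eq_or_ne i (n + 1) with rfl | hi
  · rw [Pi.single_eq_same, numFollowers, if_neg (by omega)]
    exact le_add_right (card_pos.2 ⟨1, by simp⟩)
  · simp [hi]

end IMark1323

lemma exists_four_dvd_or_odd_not_three_dvd (a : ℕ) :
    ∃ m, a ≤ m ∧ m < a + 3 ∧ (4 ∣ m ∨ m % 2 = 1 ∧ ¬ 3 ∣ m) := by
  by_cases ha : 4 ∣ a ∨ a % 2 = 1 ∧ ¬ 3 ∣ a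
  · exact ⟨a, le_rfl, by omega, ha⟩
  by_cases ha1 : 4 ∣ a + 1 ∨ (a + 1) % 2 = 1 ∧ ¬ 3 ∣ a + 1
  · exact ⟨a + 1, by omega, by omega, ha1⟩
  · exact ⟨a + 2, by omega, by omega, by omega⟩

/-- The game i-MARK({1,3},{2,3}) has no convergence: for every `k ≥ 1` there is a guess seed
for starting position `12k` whose guess sequence disagrees with the true Grundy sequence at
infinitely many positions `m ≥ 12k`; consequently, for every `k ≥ 1` and every `c ≥ 3`,
convergence does not occur in `c` steps at starting position `12k`. -/
theorem imark_13_23_no_convergence :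
    (∀ k : ℕ, 1 ≤ k → ∃ σ : ℕ → ℕ, IsGuessSeed {1, 3} {2, 3} (12 * k) σ ∧
      ∀ N : ℕ, ∃ m : ℕ, N ≤ m ∧ 12 * k ≤ m ∧
        guessSeq {1, 3} {2, 3} (12 * k) σ m ≠ grundy {1, 3} {2, 3} m) ∧
    (∀ k : ℕ, 1 ≤ k → ∀ c : ℕ, 3 ≤ c →
      ∃ σ σ' : ℕ → ℕ, IsGuessSeed {1, 3} {2, 3} (12 * k) σ ∧
        IsGuessSeed {1, 3} {2, 3} (12 * k) σ' ∧
        ∃ m : ℕ, 12 * k + c ≤ m ∧ m < 12 * k + c + 3 ∧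
          guessSeq {1, 3} {2, 3} (12 * k) σ m ≠ guessSeq {1, 3} {2, 3} (12 * k) σ' m) := by
  have hdiverge : ∀ k, 1 ≤ k → ∀ m, 12 * k ≤ m → (4 ∣ m ∨ m % 2 = 1 ∧ ¬ 3 ∣ m) →
      guessSeq {1, 3} {2, 3} (12 * k) (Pi.single (12 * k + 1) 1) m ≠ grundy {1, 3} {2, 3} m :=
    fun k hk m hm => guessSeq_imark_13_23_ne_grundy (by omega) (by omega) (by simp) (by simp) hm
      (by omega)
  refine ⟨fun k hk => ⟨_, isGuessSeed_imark_13_23_single _, fun N =>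
    ⟨12 * k + 4 * N, by omega, by omega, hdiverge k hk _ (by omega) (Or.inl (by omega))⟩⟩,
    fun k hk c _ => ?_⟩
  obtain ⟨m, hm, hm3, hpos⟩ := exists_four_dvd_or_odd_not_three_dvd (12 * k + c)
  refine ⟨_, _, isGuessSeed_imark_13_23_single _, isGuessSeed_grundy _, m, hm, hm3, ?_⟩
  rw [guessSeq_eq_grundy (fun _ _ _ => rfl) m (by omega)]
  exact hdiverge k hk m (by omega) hpos
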